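/- arXiv:cs/0404050 — 3 statements merged into one kernel-verified Lean document; each statement's English description precedes it below -/
import Mathlib

section
/- Let c(t₁,…,tₙ) ≈ d(s₁,…,s_m) be a well-typed strongly regular equational axiom, where c : (τ₁,…,τₙ) → τ and d : (τ'₁,…,τ'_m) → τ are variants of the principal types of c and d. Let V be an environment and (σ_t, σ_d) a substitution consisting of a type substitution σ_t and a partial data substitution σ_d. If tᵢσ_d ∈ Term^{τᵢσ_t}_{Σ⊥}(V) for all 1 ≤ i ≤ n, then d(s₁,…,s_m)σ_d ∈ Term^{τσ_t}_{Σ⊥}(V). -/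
namespace ACRWL

/-- Partial expressions: data variables, bottom, data constructor applications
and defined function applications (symbols named by natural numbers). -/
inductive Expr : Type where
  | var : ℕ → Expr
  | bot : Expr
  | con : ℕ → List Expr → Expr
  | fn  : ℕ → List Expr → Expr

namespace Expr

/-- Occurrence of a data variable in an expression. -/
inductive Occurs (x : ℕ) : Expr → Prop where
  | var : Occurs x (var x)
  | con {c : ℕ} {es : List Expr} {e : Expr} : e ∈ es → Occurs x e → Occurs x (con c es)
  | fn {f : ℕ} {es : List Expr} {e : Expr} : e ∈ es → Occurs x e → Occurs x (fn f es)

/-- Partial data terms: built from variables, ⊥ and data constructors only. -/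
inductive IsTerm : Expr → Prop where
  | var (x : ℕ) : IsTerm (var x)
  | bot : IsTerm bot
  | con {c : ℕ} {es : List Expr} : (∀ e ∈ es, IsTerm e) → IsTerm (con c es)

/-- Total expressions: no occurrence of ⊥. -/
inductive NoBot : Expr → Prop where
  | var (x : ℕ) : NoBot (var x)
  | con {c : ℕ} {es : List Expr} : (∀ e ∈ es, NoBot e) → NoBot (con c es)
  | fn {f : ℕ} {es : List Expr} : (∀ e ∈ es, NoBot e) → NoBot (fn f es)

/-- Total data terms. -/
def IsTotalTerm (e : Expr) : Prop := IsTerm e ∧ NoBot e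

/-- Application of a data substitution. -/
def subst (σ : ℕ → Expr) : Expr → Expr
  | var x => σ x
  | bot => bot
  | con c es => con c (es.attach.map fun e => subst σ e.1)
  | fn f es => fn f (es.attach.map fun e => subst σ e.1)
termination_by e => sizeOf e
decreasing_by
  all_goals (simp only [Expr.con.sizeOf_spec, Expr.fn.sizeOf_spec]; have := List.sizeOf_lt_of_mem e.2; omega)

/-- Number of occurrences of the variable `x`. -/
def varCount (x : ℕ) : Expr → ℕ
  | var y => if y = x then 1 else 0
  | bot => 0
  | con _ es => (es.attach.map fun e => varCount x e.1).sum
  | fn _ es => (es.attach.map fun e => varCount x e.1).sum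
termination_by e => sizeOf e
decreasing_by
  all_goals (simp only [Expr.con.sizeOf_spec, Expr.fn.sizeOf_spec]; have := List.sizeOf_lt_of_mem e.2; omega)

end Expr

/-- A set of equational axioms between (total data) terms. -/
abbrev Axioms := Set (Expr × Expr)

/-- A data substitution mapping every variable to a partial data term. -/
def TermSub (σ : ℕ → Expr) : Prop := ∀ x, (σ x).IsTerm

/-- `σ` is safe for `t`: variables occurring more than once in `t`
are mapped to total data terms. -/
def SafeSub (σ : ℕ → Expr) (t : Expr) : Prop :=
  ∀ x, 2 ≤ Expr.varCount x t → Expr.IsTotalTerm (σ x)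

/-- Well-formed set of equational axioms: a finite set of equations between
total data terms. -/
def WfAxioms (C : Axioms) : Prop :=
  C.Finite ∧ ∀ p ∈ C, Expr.IsTotalTerm p.1 ∧ Expr.IsTotalTerm p.2

/-- `[C]_⊒` : the instances of the axioms of `C`, read in both directions,
under safe partial data substitutions. -/
def CInstances (C : Axioms) : Set (Expr × Expr) :=
  { q | ∃ p ∈ C, ∃ σ : ℕ → Expr, TermSub σ ∧
      ((SafeSub σ p.1 ∧ q = (p.1.subst σ, p.2.subst σ)) ∨
       (SafeSub σ p.2 ∧ q = (p.2.subst σ, p.1.subst σ))) }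

/-- Every axiom is regular : both sides have the same data variables. -/
def RegularAxioms (C : Axioms) : Prop :=
  ∀ p ∈ C, ∀ x, Expr.Occurs x p.1 ↔ Expr.Occurs x p.2

/-- Every axiom is non-collapsing : neither side is a variable. -/
def NonCollapsing (C : Axioms) : Prop :=
  ∀ p ∈ C, (∀ x, p.1 ≠ Expr.var x) ∧ (∀ x, p.2 ≠ Expr.var x)

/-- Strongly regular set of axioms. -/
def StronglyRegular (C : Axioms) : Prop := RegularAxioms C ∧ NonCollapsing C

/-- The inequational calculus associated to `C`, deriving approximation
inequalities `s ⊒ t` between partial data terms. -/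
inductive Geq (C : Axioms) : Expr → Expr → Prop where
  | bot {t : Expr} : t.IsTerm → Geq C t Expr.bot
  | refl {t : Expr} : t.IsTerm → Geq C t t
  | trans {t t' t'' : Expr} : Geq C t t' → Geq C t' t'' → Geq C t t''
  | mono {c : ℕ} {ts ss : List Expr} : ts.length = ss.length →
      (∀ p ∈ ts.zip ss, Geq C p.1 p.2) → Geq C (Expr.con c ts) (Expr.con c ss)
  | ax {s t : Expr} : (s, t) ∈ CInstances C → Geq C s t

/-- `s ≈_C t` iff `s ⊒_C t` and `t ⊒_C s`. -/
def EqC (C : Axioms) (s t : Expr) : Prop := Geq C s t ∧ Geq C t s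

end ACRWL

namespace ACRWL

/-- A defining rule `f(t₁,…,tₙ) → r ⇐ a₁ == b₁, …, a_m == b_m`. -/
structure Rule : Type where
  fname : ℕ
  lhs : List Expr
  rhs : Expr
  conds : List (Expr × Expr)

/-- Application of a data substitution to a defining rule. -/
def Rule.subst (σ : ℕ → Expr) (ρ : Rule) : Rule :=
  ⟨ρ.fname, ρ.lhs.map (Expr.subst σ), ρ.rhs.subst σ,
    ρ.conds.map fun p => (p.1.subst σ, p.2.subst σ)⟩

/-- A linear tuple of terms: no variable occurs more than once in the tuple. -/
def Linear (ts : List Expr) : Prop := ∀ x : ℕ, (ts.map (Expr.varCount x)).sum ≤ 1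

/-- Well-formed defining rule: linear left-hand side made of total data
terms; total right-hand side and conditions. -/
def WfRule (ρ : Rule) : Prop :=
  Linear ρ.lhs ∧ (∀ t ∈ ρ.lhs, Expr.IsTotalTerm t) ∧ ρ.rhs.NoBot ∧
  ∀ p ∈ ρ.conds, p.1.NoBot ∧ p.2.NoBot

/-- A program: a finite set of equational axioms for constructors together
with a finite set of defining rules for functions. -/
structure Program : Type where
  C : Axioms
  R : Set Rule
  wfC : WfAxioms C
  finR : R.Finite
  wfR : ∀ ρ ∈ R, WfRule ρ

/-- `[R]_→` : all instances of rules of the program under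
partial data substitutions. -/
def RInstances (P : Program) : Set Rule :=
  { ρ' | ∃ ρ ∈ P.R, ∃ σ : ℕ → Expr, TermSub σ ∧ ρ' = ρ.subst σ }

/-- Statements derived by the rewriting calculi: reduction/approximation
statements `e → e'` and joinability statements `e == e'`. -/
inductive Stm : Type where
  | red : Expr → Expr → Stm
  | join : Expr → Expr → Stm

/-- The Basic Rewriting Calculus (BRC) of a program. -/
inductive BRC (P : Program) : Stm → Prop where
  | bot (e : Expr) : BRC P (Stm.red e Expr.bot)
  | refl (e : Expr) : BRC P (Stm.red e e)
  | trans {e e' e'' : Expr} :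
      BRC P (Stm.red e e') → BRC P (Stm.red e' e'') → BRC P (Stm.red e e'')
  | monoCon {c : ℕ} {es es' : List Expr} : es.length = es'.length →
      (∀ p ∈ es.zip es', BRC P (Stm.red p.1 p.2)) →
      BRC P (Stm.red (Expr.con c es) (Expr.con c es'))
  | monoFn {f : ℕ} {es es' : List Expr} : es.length = es'.length →
      (∀ p ∈ es.zip es', BRC P (Stm.red p.1 p.2)) →
      BRC P (Stm.red (Expr.fn f es) (Expr.fn f es'))
  | rule {ρ : Rule} : ρ ∈ RInstances P →
      (∀ p ∈ ρ.conds, BRC P (Stm.join p.1 p.2)) →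
      BRC P (Stm.red (Expr.fn ρ.fname ρ.lhs) ρ.rhs)
  | mut {s t : Expr} : (s, t) ∈ CInstances P.C → BRC P (Stm.red s t)
  | join {e e' t : Expr} : t.IsTotalTerm →
      BRC P (Stm.red e t) → BRC P (Stm.red e' t) → BRC P (Stm.join e e')

/-- The Goal-Oriented Rewriting Calculus (GORC) of a program. -/
inductive GORC (P : Program) : Stm → Prop where
  | bot (e : Expr) : GORC P (Stm.red e Expr.bot)
  | rrefl (x : ℕ) : GORC P (Stm.red (Expr.var x) (Expr.var x))
  | dc {c : ℕ} {es ts : List Expr} : es.length = ts.length →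
      (∀ p ∈ es.zip ts, GORC P (Stm.red p.1 p.2)) →
      GORC P (Stm.red (Expr.con c es) (Expr.con c ts))
  | omut {c : ℕ} {es ts : List Expr} {s t : Expr} : t ≠ Expr.bot →
      (Expr.con c ts, s) ∈ CInstances P.C → es.length = ts.length →
      (∀ p ∈ es.zip ts, GORC P (Stm.red p.1 p.2)) →
      GORC P (Stm.red s t) → GORC P (Stm.red (Expr.con c es) t)
  | orule {es : List Expr} {ρ : Rule} {t : Expr} : t ≠ Expr.bot →
      ρ ∈ RInstances P → es.length = ρ.lhs.length →
      (∀ p ∈ es.zip ρ.lhs, GORC P (Stm.red p.1 p.2)) →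
      (∀ p ∈ ρ.conds, GORC P (Stm.join p.1 p.2)) →
      GORC P (Stm.red ρ.rhs t) → GORC P (Stm.red (Expr.fn ρ.fname es) t)
  | join {e e' t : Expr} : t.IsTotalTerm →
      GORC P (Stm.red e t) → GORC P (Stm.red e' t) → GORC P (Stm.join e e')

end ACRWL

namespace ACRWL

/-- Polymorphic types built from type variables and type constructors. -/
inductive Ty : Type where
  | tvar : ℕ → Ty
  | tcon : ℕ → List Ty → Ty

namespace Ty

/-- Occurrence of a type variable in a type. -/
inductive OccursT (α : ℕ) : Ty → Prop where
  | tvar : OccursT α (tvar α)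
  | tcon {K : ℕ} {τs : List Ty} {τ : Ty} : τ ∈ τs → OccursT α τ → OccursT α (tcon K τs)

/-- Application of a type substitution. -/
def subst (σ : ℕ → Ty) : Ty → Ty
  | tvar α => σ α
  | tcon K τs => tcon K (τs.attach.map fun τ => subst σ τ.1)
termination_by τ => sizeOf τ
decreasing_by
  all_goals (simp only [Ty.tcon.sizeOf_spec]; have := List.sizeOf_lt_of_mem τ.2; omega)

end Ty

/-- A principal type declaration `(τ₁,…,τₙ) → τ`. -/
structure Decl : Type where
  args : List Ty
  res : Ty

/-- Transparency: every type variable of the argument types occurs in the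
result type. -/
def Decl.Transparent (d : Decl) : Prop :=
  ∀ α : ℕ, (∃ τ ∈ d.args, Ty.OccursT α τ) → Ty.OccursT α d.res

/-- Instance of a declaration under a type substitution. -/
def Decl.substT (σt : ℕ → Ty) (d : Decl) : Decl :=
  ⟨d.args.map (Ty.subst σt), d.res.subst σt⟩

/-- A variant of a declaration: a renaming of its type variables. -/
def IsVariant (d d' : Decl) : Prop :=
  ∃ ρ : ℕ → ℕ, Function.Injective ρ ∧ d' = d.substT (fun α => Ty.tvar (ρ α))

/-- A polymorphic signature: (optional) principal type declarations for data
constructors and for defined function symbols, the former transparent. -/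
structure Signature : Type where
  dc : ℕ → Option Decl
  fs : ℕ → Option Decl
  dc_trans : ∀ c d, dc c = some d → Decl.Transparent d

/-- An environment: at most one type annotation per data variable. -/
abbrev Env := ℕ → Option Ty

/-- Instance of an environment under a type substitution. -/
def Env.substT (V : Env) (σt : ℕ → Ty) : Env := fun x => (V x).map (Ty.subst σt)

/-- The type inference system: `HasType Sg V e τ` is the judgement
`V ⊢_{Σ⊥} e : τ`.  The symbol `⊥` has principal type `⊥ : → α`, hence
every type is an admissible instance for it. -/
inductive HasType (Sg : Signature) (V : Env) : Expr → Ty → Prop where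
  | var {x : ℕ} {τ : Ty} : V x = some τ → HasType Sg V (Expr.var x) τ
  | bot (τ : Ty) : HasType Sg V Expr.bot τ
  | con {c : ℕ} {es : List Expr} {d : Decl} {σt : ℕ → Ty} :
      Sg.dc c = some d → es.length = d.args.length →
      (∀ p ∈ es.zip d.args, HasType Sg V p.1 (Ty.subst σt p.2)) →
      HasType Sg V (Expr.con c es) (Ty.subst σt d.res)
  | fn {f : ℕ} {es : List Expr} {d : Decl} {σt : ℕ → Ty} :
      Sg.fs f = some d → es.length = d.args.length →
      (∀ p ∈ es.zip d.args, HasType Sg V p.1 (Ty.subst σt p.2)) →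
      HasType Sg V (Expr.fn f es) (Ty.subst σt d.res)

/-- Occurrence of a function symbol in an expression. -/
inductive FnOccurs (f : ℕ) : Expr → Prop where
  | head {es : List Expr} : FnOccurs f (Expr.fn f es)
  | con {c : ℕ} {es : List Expr} {e : Expr} : e ∈ es → FnOccurs f e → FnOccurs f (Expr.con c es)
  | fn {g : ℕ} {es : List Expr} {e : Expr} : e ∈ es → FnOccurs f e → FnOccurs f (Expr.fn g es)

end ACRWL

namespace ACRWL

/-- A regular defining rule: every variable of the right-hand side occurs in
the left-hand side. -/
def RegularRule (ρ : Rule) : Prop :=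
  ∀ x : ℕ, Expr.Occurs x ρ.rhs → ∃ t ∈ ρ.lhs, Expr.Occurs x t

/-- A well-typed (regular) defining rule for `f : (τ₁,…,τₙ) → τ`: in some
environment the left-hand side arguments have the declared argument types,
the right-hand side has the declared result type, and the two sides of every
condition share a type. -/
def WellTypedRule (Sg : Signature) (ρ : Rule) : Prop :=
  ∃ d : Decl, Sg.fs ρ.fname = some d ∧ ρ.lhs.length = d.args.length ∧
    ∃ V : Env,
      (∀ p ∈ ρ.lhs.zip d.args, HasType Sg V p.1 p.2) ∧
      HasType Sg V ρ.rhs d.res ∧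
      ∀ p ∈ ρ.conds, ∃ τ : Ty, HasType Sg V p.1 τ ∧ HasType Sg V p.2 τ

/-- A well-typed strongly regular equational axiom
`c(t₁,…,tₙ) ≈ d(s₁,…,s_m)`: the principal types of `c` and `d` admit
variants with a common result type `τ` such that both sides have type `τ`
in some environment. -/
def WellTypedAxiom (Sg : Signature) (p : Expr × Expr) : Prop :=
  ∃ (c : ℕ) (ts : List Expr) (d : ℕ) (ss : List Expr)
      (τs τs' : List Ty) (τ : Ty),
    p.1 = Expr.con c ts ∧ p.2 = Expr.con d ss ∧
    (∃ D, Sg.dc c = some D ∧ IsVariant D ⟨τs, τ⟩) ∧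
    (∃ D, Sg.dc d = some D ∧ IsVariant D ⟨τs', τ⟩) ∧
    ∃ V : Env, HasType Sg V p.1 τ ∧ HasType Sg V p.2 τ

/-- A well-typed strongly regular program. -/
def WellTypedProgram (Sg : Signature) (P : Program) : Prop :=
  StronglyRegular P.C ∧
  (∀ p ∈ P.C, WellTypedAxiom Sg p) ∧
  (∀ ρ ∈ P.R, RegularRule ρ ∧ WellTypedRule Sg ρ)

end ACRWL

namespace ACRWL


section Aux

lemma tySubst_tcon (σ : ℕ → Ty) (K : ℕ) (τs : List Ty) :
    Ty.subst σ (Ty.tcon K τs) = Ty.tcon K (τs.map (Ty.subst σ)) := by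
  rw [Ty.subst]; congr 1; simp

lemma tySubst_tvar (σ : ℕ → Ty) (α : ℕ) : Ty.subst σ (Ty.tvar α) = σ α := by
  rw [Ty.subst]

lemma exprSubst_con (σ : ℕ → Expr) (c : ℕ) (es : List Expr) :
    Expr.subst σ (Expr.con c es) = Expr.con c (es.map (Expr.subst σ)) := by
  rw [Expr.subst]; congr 1; simp

lemma exprSubst_var (σ : ℕ → Expr) (x : ℕ) : Expr.subst σ (Expr.var x) = σ x := by
  rw [Expr.subst]

lemma exprSubst_bot (σ : ℕ → Expr) : Expr.subst σ Expr.bot = Expr.bot := by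
  rw [Expr.subst]

lemma tySubst_comp (σ1 σ2 : ℕ → Ty) : ∀ τ : Ty,
    Ty.subst σ2 (Ty.subst σ1 τ) = Ty.subst (fun α => Ty.subst σ2 (σ1 α)) τ
  | Ty.tvar α => by rw [tySubst_tvar, tySubst_tvar]
  | Ty.tcon K τs => by
      rw [tySubst_tcon, tySubst_tcon, tySubst_tcon, List.map_map]
      congr 1
      refine List.map_congr_left fun τ hτ => tySubst_comp σ1 σ2 τ
termination_by τ => sizeOf τ
decreasing_by
  simp only [Ty.tcon.sizeOf_spec]; have := List.sizeOf_lt_of_mem hτ; omega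

lemma tySubst_congr (σ1 σ2 : ℕ → Ty) : ∀ τ : Ty,
    (∀ α, Ty.OccursT α τ → σ1 α = σ2 α) → Ty.subst σ1 τ = Ty.subst σ2 τ
  | Ty.tvar α, h => by rw [tySubst_tvar, tySubst_tvar]; exact h α Ty.OccursT.tvar
  | Ty.tcon K τs, h => by
      rw [tySubst_tcon, tySubst_tcon]
      congr 1
      refine List.map_congr_left fun τ hτ =>
        tySubst_congr σ1 σ2 τ (fun α hα => h α (Ty.OccursT.tcon hτ hα))
termination_by τ => sizeOf τ
decreasing_by
  simp only [Ty.tcon.sizeOf_spec]; have := List.sizeOf_lt_of_mem hτ; omega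

lemma tySubst_agree {σ1 σ2 : ℕ → Ty} {τ : Ty} (h : Ty.subst σ1 τ = Ty.subst σ2 τ)
    {α : ℕ} (hα : Ty.OccursT α τ) : σ1 α = σ2 α := by
  induction hα with
  | tvar => rwa [tySubst_tvar, tySubst_tvar] at h
  | tcon hmem hocc ih =>
      rw [tySubst_tcon, tySubst_tcon] at h
      simp only [Ty.tcon.injEq, true_and] at h
      exact ih (List.map_eq_map_iff.mp h _ hmem)

lemma isTerm_subst {σ : ℕ → Expr} (hσ : TermSub σ) {e : Expr} (h : e.IsTerm) :
    (e.subst σ).IsTerm := by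
  induction h with
  | var x => rw [exprSubst_var]; exact hσ x
  | bot => rw [exprSubst_bot]; exact Expr.IsTerm.bot
  | con hall ih =>
      rw [exprSubst_con]
      refine Expr.IsTerm.con ?_
      intro e' he'
      obtain ⟨a, ha, rfl⟩ := List.mem_map.mp he'
      exact ih a ha

lemma hasType_con_inv {Sg : Signature} {V : Env} {c : ℕ} {es : List Expr} {τ : Ty}
    (h : HasType Sg V (Expr.con c es) τ) :
    ∃ (D : Decl) (σ : ℕ → Ty), Sg.dc c = some D ∧ τ = Ty.subst σ D.res ∧
      es.length = D.args.length ∧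
      ∀ p ∈ es.zip D.args, HasType Sg V p.1 (Ty.subst σ p.2) := by
  cases h with
  | con hdc hlen hargs => exact ⟨_, _, hdc, rfl, hlen, hargs⟩

lemma mem_zip_of_index {A B : Type*} {l1 : List A} {l2 : List B} {i : ℕ}
    (h1 : i < l1.length) (h2 : i < l2.length) :
    (l1[i], l2[i]) ∈ l1.zip l2 := by
  have hz : i < (l1.zip l2).length := by simp [List.length_zip]; omega
  have := List.getElem_zip (l := l1) (l' := l2) (i := i) (h := hz)
  rw [← this]
  exact List.getElem_mem _

lemma occurs_con_inv {x c : ℕ} {es : List Expr} (h : Expr.Occurs x (Expr.con c es)) :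
    ∃ e ∈ es, Expr.Occurs x e := by
  cases h with | con hmem hocc => exact ⟨_, hmem, hocc⟩

/-- Key lemma (occurrence direction): if a data term `t` has type `τ0` in `V₀`
and its instance `tσd` has type `τ0σt` in `V`, then for every variable `x`
occurring in `t`, `σd x` has type `(V₀ x)σt` in `V`. -/
lemma key_occ (Sg : Signature) (V₀ V : Env) (σd : ℕ → Expr) (σt : ℕ → Ty) :
    ∀ {x : ℕ} {t : Expr}, Expr.Occurs x t → t.IsTerm → ∀ τ0, HasType Sg V₀ t τ0 →
      HasType Sg V (t.subst σd) (Ty.subst σt τ0) →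
      ∃ τx, V₀ x = some τx ∧ HasType Sg V (σd x) (Ty.subst σt τx) := by
  intro x t hocc
  induction hocc with
  | var =>
      intro _ τ0 h1 h2
      cases h1 with
      | var hV => exact ⟨τ0, hV, by rwa [exprSubst_var] at h2⟩
  | @con c es e hmem hocc ih =>
      intro hterm τ0 h1 h2
      have hterme : e.IsTerm := by cases hterm with | con h => exact h e hmem
      obtain ⟨D, σ4, hdc, rfl, hlen, hargs⟩ := hasType_con_inv h1
      rw [exprSubst_con] at h2
      obtain ⟨D', σ3, hdc', heq, hlen', hargs'⟩ := hasType_con_inv h2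
      rw [hdc] at hdc'
      obtain rfl : D = D' := Option.some.inj hdc'
      have hc2 : Ty.subst (fun α => Ty.subst σt (σ4 α)) D.res = Ty.subst σ3 D.res := by
        rw [← tySubst_comp]; exact heq
      have htrans := Sg.dc_trans c D hdc
      obtain ⟨i, hi, rfl⟩ := List.getElem_of_mem hmem
      have hiD : i < D.args.length := hlen ▸ hi
      have h1' : HasType Sg V₀ es[i] (Ty.subst σ4 (D.args[i])) :=
        hargs _ (mem_zip_of_index hi hiD)
      have h2' : HasType Sg V ((es[i]).subst σd) (Ty.subst σ3 (D.args[i])) := by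
        have him : i < (es.map (Expr.subst σd)).length := by simpa using hi
        have := hargs' _ (mem_zip_of_index him hiD)
        rwa [List.getElem_map] at this
      have hargty : Ty.subst σ3 (D.args[i]) = Ty.subst σt (Ty.subst σ4 (D.args[i])) := by
        rw [tySubst_comp]
        refine (tySubst_congr _ _ _ ?_).symm
        intro α hα
        exact tySubst_agree hc2 (htrans α ⟨D.args[i], List.getElem_mem _, hα⟩)
      rw [hargty] at h2'
      exact ih hterme _ h1' h2'
  | fn hmem hocc ih =>
      intro hterm
      cases hterm

/-- Key lemma (construction direction): if a data term `s` has type `τ0` in `V₀`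
and every variable of `s` is mapped by `σd` to a term of the `σt`-instance of
its `V₀`-type, then `sσd` has type `τ0σt` in `V`. -/
lemma key_build (Sg : Signature) (V₀ V : Env) (σd : ℕ → Expr) (σt : ℕ → Ty) :
    ∀ {s : Expr}, s.IsTerm → ∀ τ0, HasType Sg V₀ s τ0 →
      (∀ x, Expr.Occurs x s → ∀ τx, V₀ x = some τx →
        HasType Sg V (σd x) (Ty.subst σt τx)) →
      HasType Sg V (s.subst σd) (Ty.subst σt τ0) := by
  intro s hterm
  induction hterm with
  | var x =>
      intro τ0 h1 hvars
      cases h1 with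
      | var hV => rw [exprSubst_var]; exact hvars x Expr.Occurs.var τ0 hV
  | bot =>
      intro τ0 h1 hvars
      rw [exprSubst_bot]; exact HasType.bot _
  | @con c es hall ih =>
      intro τ0 h1 hvars
      obtain ⟨D, σ4, hdc, rfl, hlen, hargs⟩ := hasType_con_inv h1
      rw [exprSubst_con, tySubst_comp]
      refine HasType.con hdc (by simpa using hlen) ?_
      intro p hp
      obtain ⟨i, hi, hpe⟩ := List.getElem_of_mem hp
      rw [List.getElem_zip] at hpe
      subst hpe
      simp only [List.length_zip, List.length_map] at hi
      have hie : i < es.length := by omega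
      have hiD : i < D.args.length := by omega
      have him : i < (es.map (Expr.subst σd)).length := by simpa using hie
      show HasType Sg V ((es.map (Expr.subst σd))[i]'him)
        (Ty.subst (fun α => Ty.subst σt (σ4 α)) (D.args[i]'hiD))
      rw [List.getElem_map, ← tySubst_comp]
      refine ih _ (List.getElem_mem _) _ (hargs _ (mem_zip_of_index hie hiD)) ?_
      intro y hy τy hVy
      exact hvars y (Expr.Occurs.con (List.getElem_mem _) hy) τy hVy

end Aux

/-- Lemma 4.8 (b) (type preservation by instances): let
`c(t₁,…,tₙ) ≈ d(s₁,…,s_m)` be a well-typed strongly regular equational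
axiom, with variants `c : (τ₁,…,τₙ) → τ` and `d : (τ'₁,…,τ'_m) → τ` of the
principal types of `c` and `d`.  If `tᵢσd ∈ Term^{τᵢσt}_{Σ⊥}(V)` for all
`i`, then `d(s₁,…,s_m)σd ∈ Term^{τσt}_{Σ⊥}(V)`. -/
theorem axiom_type_preservation (Sg : Signature)
    (c : ℕ) (ts : List Expr) (d : ℕ) (ss : List Expr)
    (τs τs' : List Ty) (τ : Ty)
    (htot : (∀ t ∈ ts, Expr.IsTotalTerm t) ∧ (∀ s ∈ ss, Expr.IsTotalTerm s))
    (hreg : ∀ x, Expr.Occurs x (Expr.con c ts) ↔ Expr.Occurs x (Expr.con d ss))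
    (hc : ∃ D, Sg.dc c = some D ∧ IsVariant D ⟨τs, τ⟩)
    (hdd : ∃ D, Sg.dc d = some D ∧ IsVariant D ⟨τs', τ⟩)
    (hlen : ts.length = τs.length) (hlen' : ss.length = τs'.length)
    (hwt : ∃ V₀ : Env, HasType Sg V₀ (Expr.con c ts) τ ∧
        HasType Sg V₀ (Expr.con d ss) τ)
    (V : Env) (σt : ℕ → Ty) (σd : ℕ → Expr) (hσd : TermSub σd)
    (hargs : ∀ p ∈ ts.zip τs,
        Expr.IsTerm (Expr.subst σd p.1) ∧
        HasType Sg V (Expr.subst σd p.1) (Ty.subst σt p.2)) :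
    Expr.IsTerm (Expr.subst σd (Expr.con d ss)) ∧
    HasType Sg V (Expr.subst σd (Expr.con d ss)) (Ty.subst σt τ) := by
  obtain ⟨Dc, hdcc, ρc, hinjc, hvarc⟩ := hc
  obtain ⟨V₀, hwtc, hwtd⟩ := hwt
  simp only [Decl.substT, Decl.mk.injEq] at hvarc
  obtain ⟨hτs, hτ⟩ := hvarc
  obtain ⟨Dc', σ1, hdcc', hτeq1, hlenc, hargsc⟩ := hasType_con_inv hwtc
  rw [hdcc] at hdcc'
  obtain rfl : Dc = Dc' := Option.some.inj hdcc'
  obtain ⟨Dd, σ2, hdcd', hτeq2, hlend, hargsd⟩ := hasType_con_inv hwtd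
  have hagreec : Ty.subst σ1 Dc.res = Ty.subst (fun α => Ty.tvar (ρc α)) Dc.res :=
    hτeq1 ▸ hτ
  have htransc := Sg.dc_trans c Dc hdcc
  -- typed images of the variables of the right-hand side
  have H : ∀ x, Expr.Occurs x (Expr.con d ss) → ∀ τx, V₀ x = some τx →
      HasType Sg V (σd x) (Ty.subst σt τx) := by
    intro x hx τx hVx
    have hx' : Expr.Occurs x (Expr.con c ts) := (hreg x).mpr hx
    obtain ⟨t, htmem, hxt⟩ := occurs_con_inv hx'
    obtain ⟨i, hi, rfl⟩ := List.getElem_of_mem htmem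
    have hiD : i < Dc.args.length := hlenc ▸ hi
    have hiτs : i < τs.length := hlen ▸ hi
    have hτsi : τs[i] = Ty.subst σ1 (Dc.args[i]) := by
      have : τs[i] = Ty.subst (fun α => Ty.tvar (ρc α)) (Dc.args[i]) := by
        have := List.getElem_map (f := Ty.subst (fun α => Ty.tvar (ρc α)))
          (l := Dc.args) (h := by simpa [← hτs] using hiτs)
        simp only [← hτs] at this
        exact this
      rw [this]
      refine (tySubst_congr _ _ _ ?_).symm
      intro α hα
      exact tySubst_agree hagreec (htransc α ⟨Dc.args[i], List.getElem_mem _, hα⟩)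
    have h1 : HasType Sg V₀ ts[i] (τs[i]) := by
      rw [hτsi]; exact hargsc _ (mem_zip_of_index hi hiD)
    have h2 : HasType Sg V ((ts[i]).subst σd) (Ty.subst σt (τs[i])) :=
      (hargs _ (mem_zip_of_index hi hiτs)).2
    obtain ⟨τx', hVx', hty⟩ :=
      key_occ Sg V₀ V σd σt hxt (htot.1 _ htmem).1 _ h1 h2
    rw [hVx] at hVx'
    obtain rfl : τx = τx' := Option.some.inj hVx'
    exact hty
  constructor
  · exact isTerm_subst hσd (Expr.IsTerm.con fun s' hs' => (htot.2 s' hs').1)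
  · rw [exprSubst_con, hτeq2, tySubst_comp]
    refine HasType.con hdcd' (by simpa using hlend) ?_
    intro p hp
    obtain ⟨j, hj, hpe⟩ := List.getElem_of_mem hp
    rw [List.getElem_zip] at hpe
    subst hpe
    simp only [List.length_zip, List.length_map] at hj
    have hje : j < ss.length := by omega
    have hjD : j < Dd.args.length := by omega
    have hjm : j < (ss.map (Expr.subst σd)).length := by simpa using hje
    show HasType Sg V ((ss.map (Expr.subst σd))[j]'hjm)
      (Ty.subst (fun α => Ty.subst σt (σ2 α)) (Dd.args[j]'hjD))
    rw [List.getElem_map, ← tySubst_comp]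
    refine key_build Sg V₀ V σd σt (htot.2 _ (List.getElem_mem _)).1 _
      (hargsd _ (mem_zip_of_index hje hjD)) ?_
    intro y hy τy hVy
    exact H y (Expr.Occurs.con (List.getElem_mem _) hy) τy hVy

end ACRWL
end

section
/- Let c(t₁,…,tₙ) ≈ d(s₁,…,s_m) be a well-typed strongly regular equation, and let c(t'₁,…,t'ₙ) → d(s₁,…,s_m) ⇐ C₁ be a rule obtained by linearization of the axiom (each occurrence of a repeated variable x in c(t₁,…,tₙ) beyond the first is replaced by a fresh variable y, adding the condition x == y to C₁). Then there exist an environment V and variants c : (τ₁,…,τₙ) → τ and d : (τ'₁,…,τ'_m) → τ of the principal types of c and d such that c(t'₁,…,t'ₙ), d(s₁,…,s_m) ∈ Term^τ_Σ(V) and every condition of C₁ is well-typed w.r.t. V (its two sides share a type in V). -/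
namespace ACRWL

/-- `ts'` and `C₁` are obtained from the left-hand side `c(t₁,…,tₙ)` of the
axiom `c(t₁,…,tₙ) ≈ d(s₁,…,s_m)` by linearization: every occurrence of a
repeated variable `x` beyond the first is replaced by a fresh variable `y`
(recorded by the renaming-back map `θ`), adding the condition `x == y` to
`C₁`. -/
def IsLinearization (c : ℕ) (ts : List Expr) (d : ℕ) (ss : List Expr)
    (ts' : List Expr) (C₁ : List (Expr × Expr)) : Prop :=
  ∃ θ : ℕ → ℕ,
    (∀ x, Expr.Occurs x (Expr.con c ts) → θ x = x) ∧
    (∀ y, θ y ≠ y →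
        ¬ Expr.Occurs y (Expr.con c ts) ∧ ¬ Expr.Occurs y (Expr.con d ss) ∧
        Expr.Occurs (θ y) (Expr.con c ts)) ∧
    ts = ts'.map (Expr.subst fun y => Expr.var (θ y)) ∧
    Linear ts' ∧
    (∀ a b : Expr, (a, b) ∈ C₁ ↔
        ∃ y, Expr.Occurs y (Expr.con c ts') ∧ θ y ≠ y ∧
          a = Expr.var (θ y) ∧ b = Expr.var y)

/-!
Let `θ` send every fresh variable of the linearized left-hand side back to the variable it
replaces, so that `c(t₁,…,tₙ) = c(t'₁,…,t'ₙ)θ`. If `V₀` types the axiom, take `V := V₀ ∘ θ`: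
typing reflects along renamings and totality of data terms along any substitution, so
`c(t'₁,…,t'ₙ)` is total of type `τ` in `V`. The fresh variables do not occur in `d(s₁,…,s_m)`,
so `V` and `V₀` agree on its variables. A condition `x == y` has `θ y = x`, hence both of its
sides get the type of `x` in `V₀`.
-/

end ACRWL

theorem List.exists_mem_zip_of_mem_left {α β : Type*} {a : α} {l : List α} {l' : List β}
    (h : a ∈ l) (hlen : l.length = l'.length) : ∃ b, (a, b) ∈ l.zip l' := by
  obtain ⟨i, hi, rfl⟩ := List.getElem_of_mem h
  exact ⟨l'[i], List.mem_iff_getElem.mpr ⟨i, by simp; omega, by simp⟩⟩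

namespace ACRWL

namespace Expr

theorem subst_var (σ : ℕ → Expr) (x : ℕ) : (var x).subst σ = σ x := by
  rw [subst]

theorem subst_con (σ : ℕ → Expr) (c : ℕ) (es : List Expr) :
    (con c es).subst σ = con c (es.map (subst σ)) := by
  rw [subst]
  simp only [List.map_attach_eq_pmap, List.pmap_eq_map]

theorem subst_fn (σ : ℕ → Expr) (f : ℕ) (es : List Expr) :
    (fn f es).subst σ = fn f (es.map (subst σ)) := by
  rw [subst]
  simp only [List.map_attach_eq_pmap, List.pmap_eq_map]

theorem IsTerm.of_subst {σ : ℕ → Expr} : ∀ {e : Expr}, (e.subst σ).IsTerm → e.IsTerm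
  | .var x, _ => IsTerm.var x
  | .bot, _ => IsTerm.bot
  | .con c es, h => by
    rw [subst_con] at h
    cases h with
    | con hes => exact IsTerm.con fun e he => IsTerm.of_subst (hes _ (List.mem_map_of_mem he))
  | .fn f es, h => by
    rw [subst_fn] at h
    cases h

theorem NoBot.of_subst {σ : ℕ → Expr} : ∀ {e : Expr}, (e.subst σ).NoBot → e.NoBot
  | .var x, _ => NoBot.var x
  | .bot, h => by
    rw [subst] at h
    cases h
  | .con c es, h => by
    rw [subst_con] at h
    cases h with
    | con hes => exact NoBot.con fun e he => NoBot.of_subst (hes _ (List.mem_map_of_mem he))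
  | .fn f es, h => by
    rw [subst_fn] at h
    cases h with
    | fn hes => exact NoBot.fn fun e he => NoBot.of_subst (hes _ (List.mem_map_of_mem he))

theorem IsTotalTerm.of_subst {σ : ℕ → Expr} {e : Expr} (h : (e.subst σ).IsTotalTerm) :
    e.IsTotalTerm :=
  ⟨h.1.of_subst, h.2.of_subst⟩

theorem isTotalTerm_con {c : ℕ} {es : List Expr} :
    (con c es).IsTotalTerm ↔ ∀ e ∈ es, e.IsTotalTerm := by
  constructor
  · rintro ⟨hterm, hnobot⟩ e he
    cases hterm with
    | con hterm => cases hnobot with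
      | con hnobot => exact ⟨hterm e he, hnobot e he⟩
  · intro h
    exact ⟨IsTerm.con fun e he => (h e he).1, NoBot.con fun e he => (h e he).2⟩

end Expr

theorem HasType.exists_of_occurs {Sg : Signature} {V : Env} {e : Expr} {τ : Ty} {x : ℕ}
    (h : HasType Sg V e τ) (hx : e.Occurs x) : ∃ τ', V x = some τ' := by
  induction h with
  | var hV => cases hx; exact ⟨_, hV⟩
  | bot => cases hx
  | con _ hlen _ ih =>
    cases hx with
    | con he hxe =>
      obtain ⟨_, hmem⟩ := List.exists_mem_zip_of_mem_left he hlen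
      exact ih _ hmem hxe
  | fn _ hlen _ ih =>
    cases hx with
    | fn he hxe =>
      obtain ⟨_, hmem⟩ := List.exists_mem_zip_of_mem_left he hlen
      exact ih _ hmem hxe

theorem HasType.of_subst {Sg : Signature} {V V' : Env} {σ : ℕ → Expr}
    (hσ : ∀ x τ, HasType Sg V (σ x) τ → V' x = some τ) :
    ∀ {e : Expr} {τ : Ty}, HasType Sg V (e.subst σ) τ → HasType Sg V' e τ
  | .var x, τ, h => HasType.var (hσ x τ (Expr.subst_var σ x ▸ h))
  | .bot, τ, _ => HasType.bot τ
  | .con c es, _, h => by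
    rw [Expr.subst_con] at h
    cases h with
    | con hd hlen hargs =>
      refine HasType.con hd (by simpa using hlen) fun p hp => ?_
      -- needed by the termination proof of the recursive call
      have hp₁ : p.1 ∈ es := (List.of_mem_zip hp).1
      refine HasType.of_subst hσ (hargs (p.1.subst σ, p.2) ?_)
      rw [List.zip_map_left]
      exact List.mem_map_of_mem hp
  | .fn f es, _, h => by
    rw [Expr.subst_fn] at h
    cases h with
    | fn hd hlen hargs =>
      refine HasType.fn hd (by simpa using hlen) fun p hp => ?_
      have hp₁ : p.1 ∈ es := (List.of_mem_zip hp).1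
      refine HasType.of_subst hσ (hargs (p.1.subst σ, p.2) ?_)
      rw [List.zip_map_left]
      exact List.mem_map_of_mem hp

theorem HasType.of_subst_rename {Sg : Signature} {V : Env} {e : Expr} {τ : Ty} (θ : ℕ → ℕ)
    (h : HasType Sg V (e.subst fun y => .var (θ y)) τ) : HasType Sg (fun y => V (θ y)) e τ :=
  HasType.of_subst (fun x τ hx => by cases hx; assumption) h

theorem HasType.congr_env {Sg : Signature} {V V' : Env} {e : Expr} {τ : Ty}
    (h : HasType Sg V e τ) (hV : ∀ x, e.Occurs x → V x = V' x) : HasType Sg V' e τ := by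
  induction h with
  | var hx => exact HasType.var (hV _ .var ▸ hx)
  | bot τ => exact HasType.bot τ
  | con hd hlen _ ih =>
    exact HasType.con hd hlen fun p hp =>
      ih p hp fun x hx => hV x (.con (List.of_mem_zip hp).1 hx)
  | fn hd hlen _ ih =>
    exact HasType.fn hd hlen fun p hp =>
      ih p hp fun x hx => hV x (.fn (List.of_mem_zip hp).1 hx)

theorem linearization_well_typed_general (Sg : Signature)
    (c : ℕ) (ts : List Expr) (d : ℕ) (ss : List Expr)
    (htot : (∀ t ∈ ts, Expr.IsTotalTerm t) ∧ (∀ s ∈ ss, Expr.IsTotalTerm s))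
    (hwt : WellTypedAxiom Sg (Expr.con c ts, Expr.con d ss))
    (ts' : List Expr) (C₁ : List (Expr × Expr))
    (hlin : IsLinearization c ts d ss ts' C₁) :
    ∃ (V : Env) (τs τs' : List Ty) (τ : Ty),
      (∃ D, Sg.dc c = some D ∧ IsVariant D ⟨τs, τ⟩) ∧
      (∃ D, Sg.dc d = some D ∧ IsVariant D ⟨τs', τ⟩) ∧
      (HasType Sg V (Expr.con c ts') τ ∧ Expr.IsTotalTerm (Expr.con c ts')) ∧
      (HasType Sg V (Expr.con d ss) τ ∧ Expr.IsTotalTerm (Expr.con d ss)) ∧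
      (∀ p ∈ C₁, ∃ τc : Ty, HasType Sg V p.1 τc ∧ HasType Sg V p.2 τc) := by
  obtain ⟨_, _, _, _, τs, τs', τ, ⟨⟩, ⟨⟩, hvc, hvd, V₀, hc, hd⟩ := hwt
  obtain ⟨θ, hfix, hfresh, rfl, -, hC⟩ := hlin
  have hren : (Expr.con c ts').subst (fun y => .var (θ y)) =
      Expr.con c (ts'.map (Expr.subst fun y => .var (θ y))) :=
    Expr.subst_con _ c ts'
  refine ⟨fun y => V₀ (θ y), τs, τs', τ, hvc, hvd, ⟨?_, ?_⟩, ⟨?_, ?_⟩, ?_⟩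
  · exact HasType.of_subst_rename θ (hren ▸ hc)
  · exact Expr.IsTotalTerm.of_subst (hren ▸ Expr.isTotalTerm_con.2 htot.1)
  · refine hd.congr_env fun x hx => ?_
    have hθx : θ x = x := not_not.1 fun hne => (hfresh x hne).2.1 hx
    rw [hθx]
  · exact Expr.isTotalTerm_con.2 htot.2
  · rintro ⟨a, b⟩ hab
    obtain ⟨y, -, hy, rfl, rfl⟩ := (hC a b).1 hab
    have hθy := (hfresh y hy).2.2
    obtain ⟨τc, hτc⟩ := hc.exists_of_occurs hθy
    exact ⟨τc, .var (by simp only [hfix _ hθy, hτc]), .var hτc⟩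

/-- Proposition 6.2 (preservation of well-typedness by linearization): if
`c(t₁,…,tₙ) ≈ d(s₁,…,s_m)` is a well-typed strongly regular equation and
`c(t'₁,…,t'ₙ) → d(s₁,…,s_m) ⇐ C₁` is a rule obtained by linearizing it,
then there are an environment `V` and variants `c : (τ₁,…,τₙ) → τ`,
`d : (τ'₁,…,τ'_m) → τ` of the principal types of `c` and `d` such that
`c(t'₁,…,t'ₙ), d(s₁,…,s_m) ∈ Term^τ_Σ(V)` and every condition of `C₁` is
well-typed w.r.t. `V`. -/
theorem linearization_well_typed (Sg : Signature)
    (c : ℕ) (ts : List Expr) (d : ℕ) (ss : List Expr)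
    (htot : (∀ t ∈ ts, Expr.IsTotalTerm t) ∧ (∀ s ∈ ss, Expr.IsTotalTerm s))
    (hreg : ∀ x, Expr.Occurs x (Expr.con c ts) ↔ Expr.Occurs x (Expr.con d ss))
    (hwt : WellTypedAxiom Sg (Expr.con c ts, Expr.con d ss))
    (ts' : List Expr) (C₁ : List (Expr × Expr))
    (hlin : IsLinearization c ts d ss ts' C₁) :
    ∃ (V : Env) (τs τs' : List Ty) (τ : Ty),
      (∃ D, Sg.dc c = some D ∧ IsVariant D ⟨τs, τ⟩) ∧
      (∃ D, Sg.dc d = some D ∧ IsVariant D ⟨τs', τ⟩) ∧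
      (HasType Sg V (Expr.con c ts') τ ∧ Expr.IsTotalTerm (Expr.con c ts')) ∧
      (HasType Sg V (Expr.con d ss) τ ∧ Expr.IsTotalTerm (Expr.con d ss)) ∧
      (∀ p ∈ C₁, ∃ τc : Ty, HasType Sg V p.1 τc ∧ HasType Sg V p.2 τc) :=
  linearization_well_typed_general Sg c ts d ss htot hwt ts' C₁ hlin

end ACRWL
end

section
/- Let V be an environment, A a well-typed PT-algebra, and η = (η_t, η_d) a valuation over A that is well-typed w.r.t. V. Then for every partial expression e ∈ Expr^τ_{Σ⊥}(V): ⟦e⟧^A η_d ⊆ E^A(⟦τ⟧^A η_t). -/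
namespace ACRWL

/-- A Polymorphically Typed algebra (PT-algebra) over a signature: a poset
data universe with bottom, a type universe, a membership relation whose type
extensions are cones, operations interpreting type constructors, data
constructors (deterministic, valued in principal ideals — represented here by
their generators — monotonic and preserving maximal elements) and defined
function symbols (non-deterministic: monotonic and cone-valued). -/
structure PTAlgebra (Sg : Signature) : Type 1 where
  D : Type
  le : D → D → Prop
  le_refl : ∀ u, le u u
  le_trans : ∀ u v w, le u v → le v w → le u w
  le_antisymm : ∀ u v, le u v → le v u → u = v
  bot : D
  bot_le : ∀ u, le bot u
  T : Type
  mem : D → T → Prop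
  mem_bot : ∀ ℓ, mem bot ℓ
  mem_down : ∀ u v ℓ, le u v → mem v ℓ → mem u ℓ
  tcApp : ℕ → List T → T
  conApp : ℕ → List D → D
  conApp_mono : ∀ (c : ℕ) (us vs : List D), us.length = vs.length →
      (∀ p ∈ us.zip vs, le p.1 p.2) → le (conApp c us) (conApp c vs)
  conApp_max : ∀ (c : ℕ) (us : List D), (∀ u ∈ us, ∀ v, le u v → v = u) →
      ∀ v, le (conApp c us) v → v = conApp c us
  fnApp : ℕ → List D → Set D
  fnApp_bot : ∀ f us, bot ∈ fnApp f us
  fnApp_down : ∀ f us u v, le u v → v ∈ fnApp f us → u ∈ fnApp f us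
  fnApp_mono : ∀ (f : ℕ) (us vs : List D), us.length = vs.length →
      (∀ p ∈ us.zip vs, le p.1 p.2) → fnApp f us ⊆ fnApp f vs

/-- A maximal (totally defined) element of the data universe. -/
def PTAlgebra.Max {Sg : Signature} (A : PTAlgebra Sg) (u : A.D) : Prop :=
  ∀ v, A.le u v → v = u

/-- Denotation of polymorphic types under a type valuation. -/
def tden {Sg : Signature} (A : PTAlgebra Sg) (ηt : ℕ → A.T) : Ty → A.T
  | Ty.tvar α => ηt α
  | Ty.tcon K τs => A.tcApp K (τs.attach.map fun τ => tden A ηt τ.1)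
termination_by τ => sizeOf τ
decreasing_by
  all_goals (simp only [Ty.tcon.sizeOf_spec]; have := List.sizeOf_lt_of_mem τ.2; omega)

/-- Denotation of partial expressions under a data valuation:
`Den A ηd e u` means `u ∈ ⟦e⟧^A ηd`, where `⟦⊥⟧ = {⊥}`, `⟦x⟧ = ⟨ηd x⟩`,
and applications denote the extension of the interpreting operation to cones. -/
inductive Den {Sg : Signature} (A : PTAlgebra Sg) (ηd : ℕ → A.D) : Expr → A.D → Prop where
  | bot : Den A ηd Expr.bot A.bot
  | var {x : ℕ} {u : A.D} : A.le u (ηd x) → Den A ηd (Expr.var x) u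
  | con {c : ℕ} {es : List Expr} {vs : List A.D} {u : A.D} :
      es.length = vs.length →
      (∀ p ∈ es.zip vs, Den A ηd p.1 p.2) →
      A.le u (A.conApp c vs) → Den A ηd (Expr.con c es) u
  | fn {f : ℕ} {es : List Expr} {vs : List A.D} {u : A.D} :
      es.length = vs.length →
      (∀ p ∈ es.zip vs, Den A ηd p.1 p.2) →
      u ∈ A.fnApp f vs → Den A ηd (Expr.fn f es) u

/-- A well-typed PT-algebra: the operations interpreting the declared symbols
respect the (instances of) their declared principal types. -/
def PTAlgebra.WellTyped {Sg : Signature} (A : PTAlgebra Sg) : Prop :=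
  (∀ (c : ℕ) (D : Decl), Sg.dc c = some D → ∀ (ηt : ℕ → A.T) (vs : List A.D),
      vs.length = D.args.length →
      (∀ p ∈ vs.zip D.args, A.mem p.1 (tden A ηt p.2)) →
      ∀ u, A.le u (A.conApp c vs) → A.mem u (tden A ηt D.res)) ∧
  (∀ (f : ℕ) (D : Decl), Sg.fs f = some D → ∀ (ηt : ℕ → A.T) (vs : List A.D),
      vs.length = D.args.length →
      (∀ p ∈ vs.zip D.args, A.mem p.1 (tden A ηt p.2)) →
      ∀ u ∈ A.fnApp f vs, A.mem u (tden A ηt D.res))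

/-- A valuation well-typed w.r.t. an environment. -/
def WellTypedVal {Sg : Signature} (A : PTAlgebra Sg) (V : Env)
    (ηt : ℕ → A.T) (ηd : ℕ → A.D) : Prop :=
  ∀ x τ, V x = some τ → A.mem (ηd x) (tden A ηt τ)

end ACRWL

/-! Induction on the typing derivation. Well-typedness of `A` is required under every type
valuation, so an application typed by the instance `σt` of a principal declaration is handled
under the valuation `⟦σt⟧ηt`, via the substitution lemma `⟦τ σt⟧ηt = ⟦τ⟧(⟦σt⟧ηt)`. -/

namespace List

theorem Forall₂.of_common_left {α β γ : Type*} {P : α → β → Prop} {Q : α → γ → Prop}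
    {R : β → γ → Prop} (H : ∀ a b c, P a b → Q a c → R b c) {l : List α} {l₁ : List β}
    {l₂ : List γ} (h₁ : Forall₂ P l l₁) (h₂ : Forall₂ Q l l₂) : Forall₂ R l₁ l₂ := by
  induction h₁ generalizing l₂ with
  | nil => cases h₂; exact .nil
  | cons hab _ ih =>
    cases h₂ with
    | cons hac h₂ => exact .cons (H _ _ _ hab hac) (ih h₂)

theorem forall₂_of_forall_mem_zip {α β : Type*} {R : α → β → Prop} {l₁ : List α}
    {l₂ : List β} (h : l₁.length = l₂.length) (H : ∀ p ∈ l₁.zip l₂, R p.1 p.2) :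
    Forall₂ R l₁ l₂ :=
  forall₂_iff_zip.2 ⟨h, fun hab => H _ hab⟩

end List

namespace ACRWL

theorem Ty.subst_tcon (σt : ℕ → Ty) (K : ℕ) (τs : List Ty) :
    (Ty.tcon K τs).subst σt = Ty.tcon K (τs.map (Ty.subst σt)) := by
  rw [Ty.subst, List.attach_map_val]

section

variable {Sg : Signature} (A : PTAlgebra Sg)

theorem tden_tcon (ηt : ℕ → A.T) (K : ℕ) (τs : List Ty) :
    tden A ηt (Ty.tcon K τs) = A.tcApp K (τs.map (tden A ηt)) := by
  rw [tden, List.attach_map_val]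

theorem tden_subst (ηt : ℕ → A.T) (σt : ℕ → Ty) (τ : Ty) :
    tden A ηt (τ.subst σt) = tden A (tden A ηt ∘ σt) τ := by
  induction τ using Ty.subst.induct with
  | case1 α => simp only [Ty.subst, tden, Function.comp_apply]
  | case2 K τs ih =>
    rw [Ty.subst_tcon, tden_tcon, tden_tcon, List.map_map]
    exact congrArg _ (List.map_congr_left fun τ hτ => ih ⟨τ, hτ⟩)

theorem mem_tden_args_of_den {ηt : ℕ → A.T} {ηd : ℕ → A.D} {σt : ℕ → Ty}
    {es : List Expr} {vs : List A.D} {τs : List Ty}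
    (hτs : es.length = τs.length) (hvs : es.length = vs.length)
    (hes : ∀ p ∈ es.zip τs, ∀ u, Den A ηd p.1 u → A.mem u (tden A ηt (p.2.subst σt)))
    (hden : ∀ p ∈ es.zip vs, Den A ηd p.1 p.2) :
    vs.length = τs.length ∧ ∀ p ∈ vs.zip τs, A.mem p.1 (tden A (tden A ηt ∘ σt) p.2) := by
  have htyped : List.Forall₂ (fun e τ => ∀ u, Den A ηd e u → A.mem u (tden A ηt (τ.subst σt)))
      es τs := List.forall₂_of_forall_mem_zip hτs hes
  have hargs : List.Forall₂ (fun v τ => A.mem v (tden A (tden A ηt ∘ σt) τ)) vs τs :=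
    (List.forall₂_of_forall_mem_zip hvs hden).of_common_left
      (fun _ v τ hv hτ => tden_subst A ηt σt τ ▸ hτ v hv) htyped
  exact ⟨hargs.length_eq, fun _ hp => List.forall₂_zip hargs hp⟩

end

/-- Proposition 5.3: if `A` is a well-typed PT-algebra and `η = (ηt, ηd)` is
a valuation well-typed w.r.t. the environment `V`, then for every
`e ∈ Expr^τ_{Σ⊥}(V)` we have `⟦e⟧^A ηd ⊆ E^A(⟦τ⟧^A ηt)`. -/
theorem den_subset_extension (Sg : Signature) (A : PTAlgebra Sg)
    (V : Env) (ηt : ℕ → A.T) (ηd : ℕ → A.D)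
    (hA : A.WellTyped) (hη : WellTypedVal A V ηt ηd)
    (e : Expr) (τ : Ty) (ht : HasType Sg V e τ) :
    ∀ u : A.D, Den A ηd e u → A.mem u (tden A ηt τ) := by
  induction ht with
  | var hV =>
    intro u hu
    cases hu with
    | var hle => exact A.mem_down _ _ _ hle (hη _ _ hV)
  | bot =>
    intro u hu
    cases hu with
    | bot => exact A.mem_bot _
  | con hdc hτs _ ih =>
    intro u hu
    cases hu with
    | con hvs hden hle =>
      obtain ⟨hlen, hargs⟩ := mem_tden_args_of_den A hτs hvs ih hden
      rw [tden_subst]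
      exact hA.1 _ _ hdc _ _ hlen hargs u hle
  | fn hfs hτs _ ih =>
    intro u hu
    cases hu with
    | fn hvs hden hmem =>
      obtain ⟨hlen, hargs⟩ := mem_tden_args_of_den A hτs hvs ih hden
      rw [tden_subst]
      exact hA.2 _ _ hfs _ _ hlen hargs u hmem

end ACRWL
end
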